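/- Let d ≥ 3, let {a_i}_{i=1}^d and {b_j}_{j=1}^d be mutually unbiased orthonormal bases of ℂ^d, and let 1 ≤ m < d/2. Let A = {|a_i⟩⟨a_i|}_{i=1}^d and let B = {P^B_1, P^B_2} with P^B_1 = Σ_{j=1}^m |b_j⟩⟨b_j| and P^B_2 = I − P^B_1. Then Q_F(B→A) ≤ 1/2 < Q_F(A→B); in particular Q_F(A→B) ≠ Q_F(B→A). Moreover, for the pure state ψ = b_1 one has (Σ_j √(q^{A→B}_ψ(j) · p^B_ψ(j)))² = m/d. -/

import Mathlib

open scoped BigOperators ComplexOrder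
open Matrix

noncomputable section

/-- A projective observable: a finite family of mutually orthogonal
self-adjoint idempotents summing to the identity. -/
def IsProjObs {d r : ℕ} (P : Fin r → Matrix (Fin d) (Fin d) ℂ) : Prop :=
  (∀ i, (P i).IsHermitian) ∧ (∀ i, P i * P i = P i) ∧
    (∀ i k, i ≠ k → P i * P k = 0) ∧ (∑ i, P i = 1)

/-- A density matrix: positive semidefinite with unit trace. -/
def IsDensity {d : ℕ} (ρ : Matrix (Fin d) (Fin d) ℂ) : Prop :=
  ρ.PosSemidef ∧ ρ.trace = 1

/-- The measurement channel `E^A(ρ) = Σ_i P_i ρ P_i` of a projective observable. -/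
def measChannel {d r : ℕ} (P : Fin r → Matrix (Fin d) (Fin d) ℂ)
    (ρ : Matrix (Fin d) (Fin d) ℂ) : Matrix (Fin d) (Fin d) ℂ :=
  ∑ i, P i * ρ * P i

/-- `p^B_ρ(j) = tr(P^B_j ρ)`. -/
def probB {d rB : ℕ} (Q : Fin rB → Matrix (Fin d) (Fin d) ℂ)
    (ρ : Matrix (Fin d) (Fin d) ℂ) (j : Fin rB) : ℝ :=
  ((Q j * ρ).trace).re

/-- `q^{A→B}_ρ(j) = tr(P^B_j Σ_i P^A_i ρ P^A_i)`. -/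
def probAB {d rA rB : ℕ} (P : Fin rA → Matrix (Fin d) (Fin d) ℂ)
    (Q : Fin rB → Matrix (Fin d) (Fin d) ℂ)
    (ρ : Matrix (Fin d) (Fin d) ℂ) (j : Fin rB) : ℝ :=
  ((Q j * measChannel P ρ).trace).re

open Classical in
/-- The positive semidefinite square root of a PSD matrix (junk value `0` otherwise). -/
noncomputable def msqrt {d : ℕ} (A : Matrix (Fin d) (Fin d) ℂ) :
    Matrix (Fin d) (Fin d) ℂ :=
  if h : A.PosSemidef then
    (h.1.eigenvectorUnitary : Matrix (Fin d) (Fin d) ℂ) *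
      diagonal ((fun x : ℝ => (x : ℂ)) ∘ Real.sqrt ∘ h.1.eigenvalues) *
      (star h.1.eigenvectorUnitary : Matrix (Fin d) (Fin d) ℂ)
  else 0

/-- `|X| = √(Xᴴ X)`, the positive semidefinite absolute value of a matrix. -/
noncomputable def matAbs {d : ℕ} (X : Matrix (Fin d) (Fin d) ℂ) :
    Matrix (Fin d) (Fin d) ℂ :=
  msqrt (Xᴴ * X)

/-- The quantum fidelity `F(ρ,σ) = tr √(√ρ σ √ρ)`. -/
noncomputable def qFid {d : ℕ} (ρ σ : Matrix (Fin d) (Fin d) ℂ) : ℝ :=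
  ((msqrt (msqrt ρ * σ * msqrt ρ)).trace).re

/-- Variational distance `D_1(p,q) = (1/2) Σ_j |p_j − q_j|`. -/
def distL1 {rB : ℕ} (p q : Fin rB → ℝ) : ℝ := (1 / 2) * ∑ j, |p j - q j|

/-- Chebyshev distance `D_∞(p,q) = max_j |p_j − q_j|`. -/
noncomputable def distLinf {rB : ℕ} (p q : Fin rB → ℝ) : ℝ := ⨆ j, |p j - q j|

/-- Classical fidelity `F(p,q) = Σ_j √(p_j q_j)`. -/
noncomputable def classFid {rB : ℕ} (p q : Fin rB → ℝ) : ℝ :=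
  ∑ j, Real.sqrt (p j * q j)

/-- `Q_1(A→B)`. -/
noncomputable def Q1 {d rA rB : ℕ} (P : Fin rA → Matrix (Fin d) (Fin d) ℂ)
    (Q : Fin rB → Matrix (Fin d) (Fin d) ℂ) : ℝ :=
  sSup {x : ℝ | ∃ ρ, IsDensity ρ ∧ x = distL1 (probAB P Q ρ) (probB Q ρ)}

/-- `Q_∞(A→B)`. -/
noncomputable def Qinf {d rA rB : ℕ} (P : Fin rA → Matrix (Fin d) (Fin d) ℂ)
    (Q : Fin rB → Matrix (Fin d) (Fin d) ℂ) : ℝ :=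
  sSup {x : ℝ | ∃ ρ, IsDensity ρ ∧ x = distLinf (probAB P Q ρ) (probB Q ρ)}

/-- `Q_F(A→B)`. -/
noncomputable def QF {d rA rB : ℕ} (P : Fin rA → Matrix (Fin d) (Fin d) ℂ)
    (Q : Fin rB → Matrix (Fin d) (Fin d) ℂ) : ℝ :=
  sSup {x : ℝ | ∃ ρ, IsDensity ρ ∧
    x = 1 - (classFid (probAB P Q ρ) (probB Q ρ)) ^ 2}

/-- The rank-one projection `|v⟩⟨v|` onto a (unit) vector `v`. -/
def proj {d : ℕ} (v : Fin d → ℂ) : Matrix (Fin d) (Fin d) ℂ :=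
  Matrix.vecMulVec v (star v)

/-!
For `Q_F(B→A)`: writing `a = P^B_1 a + P^B_2 a`, the parallelogram law for the positive form
`x ↦ ⟨x, ρ x⟩` gives `p^A_ρ(i) ≤ 2 q^{B→A}_ρ(i)` for every state, hence
`F(q, p) ≥ √(1/2) · Σ_i p^A_ρ(i) = √(1/2)`.

For `Q_F(A→B)`: by mutual unbiasedness, measuring `A` on `ψ = b_1` yields the maximally mixed
state `I/d`, so `q^{A→B}_ψ = (m/d, 1 - m/d)` while `p^B_ψ = (1, 0)`.
The fidelity squared is `m/d < 1/2`, so the state `ψ` already gives `Q_F(A→B) > 1/2`.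
-/

section RankOneProjection

variable {d : ℕ}

lemma conjTranspose_proj (v : Fin d → ℂ) : (proj v)ᴴ = proj v := by
  simp [proj]

lemma proj_mulVec (v w : Fin d → ℂ) : proj v *ᵥ w = (star v ⬝ᵥ w) • v := by
  rw [proj, vecMulVec_mulVec, op_smul_eq_smul]

lemma trace_proj (v : Fin d → ℂ) : (proj v).trace = star v ⬝ᵥ v := by
  rw [proj, trace_vecMulVec, dotProduct_comm]

lemma trace_proj_mul (v : Fin d → ℂ) (M : Matrix (Fin d) (Fin d) ℂ) :
    (proj v * M).trace = star v ⬝ᵥ M *ᵥ v := by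
  rw [proj, vecMulVec_mul, trace_vecMulVec, dotProduct_comm, dotProduct_mulVec]

lemma proj_mul_proj_mul_proj (u v : Fin d → ℂ) :
    proj u * proj v * proj u = (Complex.normSq (star u ⬝ᵥ v) : ℂ) • proj u := by
  rw [proj, proj, vecMulVec_mul_vecMulVec, vecMulVec_mul_vecMulVec, smul_dotProduct,
    star_dotProduct (v := v), smul_eq_mul, vecMulVec_smul, Complex.star_def, Complex.mul_conj]

lemma isHermitian_sum_proj {r : ℕ} (b : Fin r → Fin d → ℂ) (s : Finset (Fin r)) :
    (∑ k ∈ s, proj (b k)).IsHermitian := by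
  rw [IsHermitian, conjTranspose_sum]
  exact Finset.sum_congr rfl fun k _ => conjTranspose_proj _

lemma isDensity_proj {v : Fin d → ℂ} (hv : star v ⬝ᵥ v = 1) : IsDensity (proj v) :=
  ⟨posSemidef_vecMulVec_self_star v, by rw [trace_proj, hv]⟩

end RankOneProjection

section OrthonormalFamily

variable {d r : ℕ} {b : Fin r → Fin d → ℂ}

lemma sum_proj_eq_one {a : Fin d → Fin d → ℂ}
    (ha : ∀ i j, star (a i) ⬝ᵥ a j = if i = j then 1 else 0) :
    ∑ i, proj (a i) = 1 := by
  let U : Matrix (Fin d) (Fin d) ℂ := Matrix.of fun k i => a i k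
  have hU : Uᴴ * U = 1 := by
    ext i j
    simpa [U, mul_apply, conjTranspose_apply, dotProduct, one_apply] using ha i j
  calc ∑ i, proj (a i) = U * Uᴴ := by
        ext k l
        simp [Matrix.sum_apply, proj, vecMulVec_apply, mul_apply, U, conjTranspose_apply]
    _ = 1 := mul_eq_one_comm.mp hU

lemma trace_sum_proj (hb : ∀ i j, star (b i) ⬝ᵥ b j = if i = j then 1 else 0)
    (s : Finset (Fin r)) : (∑ k ∈ s, proj (b k)).trace = s.card := by
  simp [trace_sum, trace_proj, hb]

lemma sum_proj_mulVec_of_mem (hb : ∀ i j, star (b i) ⬝ᵥ b j = if i = j then 1 else 0)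
    {s : Finset (Fin r)} {z : Fin r} (hz : z ∈ s) : (∑ k ∈ s, proj (b k)) *ᵥ b z = b z := by
  simp [sum_mulVec, proj_mulVec, hb, hz]

end OrthonormalFamily

section QuadraticForm

variable {d : ℕ} {ρ : Matrix (Fin d) (Fin d) ℂ}

lemma Matrix.PosSemidef.re_dotProduct_mulVec_nonneg (hρ : ρ.PosSemidef) (x : Fin d → ℂ) :
    0 ≤ (star x ⬝ᵥ ρ *ᵥ x).re :=
  (Complex.nonneg_iff.mp (hρ.dotProduct_mulVec_nonneg x)).1

lemma Matrix.PosSemidef.re_dotProduct_mulVec_add_le (hρ : ρ.PosSemidef) (x y : Fin d → ℂ) :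
    (star (x + y) ⬝ᵥ ρ *ᵥ (x + y)).re
      ≤ 2 * ((star x ⬝ᵥ ρ *ᵥ x).re + (star y ⬝ᵥ ρ *ᵥ y).re) := by
  have parallelogram : star (x + y) ⬝ᵥ ρ *ᵥ (x + y) + star (x - y) ⬝ᵥ ρ *ᵥ (x - y)
      = 2 * (star x ⬝ᵥ ρ *ᵥ x) + 2 * (star y ⬝ᵥ ρ *ᵥ y) := by
    simp only [mulVec_add, mulVec_sub, dotProduct_add, dotProduct_sub, add_dotProduct,
      sub_dotProduct, star_add, star_sub]
    ring
  have h := congrArg Complex.re parallelogram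
  simp only [Complex.add_re, Complex.mul_re, Complex.re_ofNat, Complex.im_ofNat, zero_mul,
    sub_zero] at h
  linarith [hρ.re_dotProduct_mulVec_nonneg (x - y)]

lemma dotProduct_mul_mul_mulVec_of_isHermitian {N : Matrix (Fin d) (Fin d) ℂ}
    (hN : N.IsHermitian) (ρ : Matrix (Fin d) (Fin d) ℂ) (u : Fin d → ℂ) :
    star u ⬝ᵥ (N * ρ * N) *ᵥ u = star (N *ᵥ u) ⬝ᵥ ρ *ᵥ (N *ᵥ u) := by
  rw [← mulVec_mulVec, ← mulVec_mulVec, dotProduct_mulVec, star_mulVec, hN.eq]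

end QuadraticForm

section Probabilities

variable {d r s : ℕ} {ρ : Matrix (Fin d) (Fin d) ℂ}

lemma sum_probB {Q : Fin r → Matrix (Fin d) (Fin d) ℂ} (hQ : ∑ j, Q j = 1) (hρ : ρ.trace = 1) :
    ∑ j, probB Q ρ j = 1 := by
  simp only [probB, ← Complex.re_sum, ← trace_sum, ← Finset.sum_mul, hQ, one_mul, hρ,
    Complex.one_re]

lemma probB_one_eq_one_sub {Q : Fin 2 → Matrix (Fin d) (Fin d) ℂ} (hQ : Q 1 = 1 - Q 0)
    (hρ : ρ.trace = 1) : probB Q ρ 1 = 1 - probB Q ρ 0 := by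
  rw [probB, probB, hQ, sub_mul, one_mul, trace_sub, hρ, Complex.sub_re, Complex.one_re]

lemma probB_proj (a : Fin r → Fin d → ℂ) (i : Fin r) :
    probB (fun i => proj (a i)) ρ i = (star (a i) ⬝ᵥ ρ *ᵥ a i).re := by
  rw [probB, trace_proj_mul]

lemma probAB_proj {Q : Fin s → Matrix (Fin d) (Fin d) ℂ} (hQ : ∀ k, (Q k).IsHermitian)
    (a : Fin r → Fin d → ℂ) (i : Fin r) :
    probAB Q (fun i => proj (a i)) ρ i = ∑ k, (star (Q k *ᵥ a i) ⬝ᵥ ρ *ᵥ (Q k *ᵥ a i)).re := by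
  simp only [probAB, measChannel, trace_proj_mul, sum_mulVec, dotProduct_sum, Complex.re_sum,
    dotProduct_mul_mul_mulVec_of_isHermitian (hQ _)]

lemma probB_proj_le_two_mul_probAB {Q : Fin 2 → Matrix (Fin d) (Fin d) ℂ}
    (hQ : ∀ k, (Q k).IsHermitian) (hQ1 : Q 0 + Q 1 = 1) (hρ : ρ.PosSemidef)
    (a : Fin r → Fin d → ℂ) (i : Fin r) :
    probB (fun i => proj (a i)) ρ i ≤ 2 * probAB Q (fun i => proj (a i)) ρ i := by
  have hsplit : Q 0 *ᵥ a i + Q 1 *ᵥ a i = a i := by rw [← add_mulVec, hQ1, one_mulVec]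
  rw [probB_proj, probAB_proj hQ, Fin.sum_univ_two]
  simpa only [hsplit] using hρ.re_dotProduct_mulVec_add_le (Q 0 *ᵥ a i) (Q 1 *ᵥ a i)

lemma measChannel_proj_of_normSq_eq {a : Fin d → Fin d → ℂ}
    (ha : ∀ i j, star (a i) ⬝ᵥ a j = if i = j then 1 else 0) {v : Fin d → ℂ} {c : ℝ}
    (hv : ∀ i, Complex.normSq (star (a i) ⬝ᵥ v) = c) :
    measChannel (fun i => proj (a i)) (proj v) = (c : ℂ) • 1 := by
  simp only [measChannel, proj_mul_proj_mul_proj, hv, ← Finset.smul_sum, sum_proj_eq_one ha]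

end Probabilities

section Fidelity

variable {r : ℕ}

lemma sqrt_le_classFid {p q : Fin r → ℝ} {c : ℝ} (hc : 0 ≤ c) (hp : ∀ j, 0 ≤ p j)
    (hp1 : ∑ j, p j = 1) (hq : ∀ j, c * p j ≤ q j) : √c ≤ classFid q p := by
  have hterm : ∀ j, √c * p j ≤ √(q j * p j) := fun j => by
    calc √c * p j = √(c * p j * p j) := by
          rw [mul_assoc, Real.sqrt_mul hc, Real.sqrt_mul_self (hp j)]
      _ ≤ √(q j * p j) := Real.sqrt_le_sqrt (mul_le_mul_of_nonneg_right (hq j) (hp j))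
  calc √c = ∑ j, √c * p j := by rw [← Finset.mul_sum, hp1, mul_one]
    _ ≤ classFid q p := Finset.sum_le_sum fun j _ => hterm j

lemma classFid_sq_of_eq_one_of_eq_zero {p q : Fin 2 → ℝ} (hp0 : p 0 = 1) (hp1 : p 1 = 0)
    (hq0 : 0 ≤ q 0) : classFid q p ^ 2 = q 0 := by
  rw [classFid, Fin.sum_univ_two, hp0, hp1, mul_one, mul_zero, Real.sqrt_zero, add_zero,
    Real.sq_sqrt hq0]

end Fidelity

section PureState

variable {d : ℕ}

lemma classFid_sq_proj_of_normSq_eq {a b : Fin d → Fin d → ℂ}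
    (ha : ∀ i j, star (a i) ⬝ᵥ a j = if i = j then 1 else 0)
    (hb : ∀ i j, star (b i) ⬝ᵥ b j = if i = j then 1 else 0)
    {s : Finset (Fin d)} {z : Fin d} (hz : z ∈ s) {c : ℝ}
    (hab : ∀ i, Complex.normSq (star (a i) ⬝ᵥ b z) = c) {Q : Fin 2 → Matrix (Fin d) (Fin d) ℂ}
    (hQ0 : Q 0 = ∑ k ∈ s, proj (b k)) (hQ1 : Q 1 = 1 - Q 0) :
    classFid (probAB (fun i => proj (a i)) Q (proj (b z))) (probB Q (proj (b z))) ^ 2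
      = c * s.card := by
  have hψ : (proj (b z)).trace = 1 := by rw [trace_proj, hb, if_pos rfl]
  have hp0 : probB Q (proj (b z)) 0 = 1 := by
    rw [probB, trace_mul_comm, trace_proj_mul, hQ0, sum_proj_mulVec_of_mem hb hz, hb, if_pos rfl,
      Complex.one_re]
  have hq0 : probAB (fun i => proj (a i)) Q (proj (b z)) 0 = c * s.card := by
    rw [probAB, measChannel_proj_of_normSq_eq ha hab, Matrix.mul_smul, mul_one, trace_smul, hQ0,
      trace_sum_proj hb, smul_eq_mul, ← Complex.ofReal_natCast, ← Complex.ofReal_mul,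
      Complex.ofReal_re]
  have hc : 0 ≤ c := hab z ▸ Complex.normSq_nonneg _
  rw [← hq0]
  exact classFid_sq_of_eq_one_of_eq_zero hp0
    (by rw [probB_one_eq_one_sub hQ1 hψ, hp0, sub_self]) (by rw [hq0]; positivity)

end PureState

section Incompatibility

variable {d rA rB : ℕ} {P : Fin rA → Matrix (Fin d) (Fin d) ℂ}
  {Q : Fin rB → Matrix (Fin d) (Fin d) ℂ}

lemma QF_le {c : ℝ} (hc : 0 ≤ c)
    (h : ∀ ρ, IsDensity ρ → 1 - classFid (probAB P Q ρ) (probB Q ρ) ^ 2 ≤ c) : QF P Q ≤ c :=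
  Real.sSup_le (by rintro x ⟨ρ, hρ, rfl⟩; exact h ρ hρ) hc

lemma le_QF {ρ : Matrix (Fin d) (Fin d) ℂ} (hρ : IsDensity ρ) :
    1 - classFid (probAB P Q ρ) (probB Q ρ) ^ 2 ≤ QF P Q := by
  refine le_csSup ⟨1, ?_⟩ ⟨ρ, hρ, rfl⟩
  rintro x ⟨σ, -, rfl⟩
  linarith [sq_nonneg (classFid (probAB P Q σ) (probB Q σ))]

theorem QF_proj_le_half {Q : Fin 2 → Matrix (Fin d) (Fin d) ℂ} (hQ : ∀ k, (Q k).IsHermitian)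
    (hQ1 : Q 0 + Q 1 = 1) {a : Fin d → Fin d → ℂ}
    (ha : ∀ i j, star (a i) ⬝ᵥ a j = if i = j then 1 else 0) :
    QF Q (fun i => proj (a i)) ≤ 1 / 2 := by
  refine QF_le (by norm_num) fun ρ hρ => ?_
  have hF : √(1 / 2) ≤ classFid (probAB Q (fun i => proj (a i)) ρ) (probB _ ρ) :=
    sqrt_le_classFid (by norm_num)
      (fun i => by rw [probB_proj]; exact hρ.1.re_dotProduct_mulVec_nonneg _)
      (sum_probB (sum_proj_eq_one ha) hρ.2)
      (fun i => by linarith [probB_proj_le_two_mul_probAB hQ hQ1 hρ.1 a i])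
  have hF2 := pow_le_pow_left₀ (Real.sqrt_nonneg _) hF 2
  rw [Real.sq_sqrt (by norm_num)] at hF2
  linarith

end Incompatibility

theorem stmt_19 {d m : ℕ} (hm1 : 1 ≤ m) (hm2 : 2 * m < d)
    (a b : Fin d → (Fin d → ℂ))
    (ha : ∀ i j, star (a i) ⬝ᵥ a j = if i = j then 1 else 0)
    (hb : ∀ i j, star (b i) ⬝ᵥ b j = if i = j then 1 else 0)
    (hmub : ∀ i j, Complex.normSq (star (a i) ⬝ᵥ b j) = 1 / (d : ℝ))
    (PB : Fin 2 → Matrix (Fin d) (Fin d) ℂ)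
    (hPB0 : PB 0 = ∑ j ∈ Finset.univ.filter (fun j : Fin d => (j : ℕ) < m), proj (b j))
    (hPB1 : PB 1 = 1 - PB 0) :
    QF PB (fun i => proj (a i)) ≤ 1 / 2 ∧
      1 / 2 < QF (fun i => proj (a i)) PB ∧
      (classFid
          (probAB (fun i => proj (a i)) PB (proj (b ⟨0, by omega⟩)))
          (probB PB (proj (b ⟨0, by omega⟩)))) ^ 2 = (m : ℝ) / (d : ℝ) := by
  set z : Fin d := ⟨0, by omega⟩
  have hz : z ∈ Finset.univ.filter (fun j : Fin d => (j : ℕ) < m) := by simp [z]; omega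
  have hcard : (Finset.univ.filter fun j : Fin d => (j : ℕ) < m).card = m := by
    rw [Fin.card_filter_val_lt]; omega
  have hF : classFid (probAB (fun i => proj (a i)) PB (proj (b z))) (probB PB (proj (b z))) ^ 2
      = m / d := by
    rw [classFid_sq_proj_of_normSq_eq ha hb hz (fun i => hmub i z) hPB0 hPB1, hcard,
      one_div_mul_eq_div]
  have hPB0H : (PB 0).IsHermitian := hPB0 ▸ isHermitian_sum_proj b _
  have hPBH : ∀ k, (PB k).IsHermitian :=
    Fin.forall_fin_two.2 ⟨hPB0H, hPB1 ▸ isHermitian_one.sub hPB0H⟩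
  refine ⟨QF_proj_le_half hPBH (by rw [hPB1, add_sub_cancel]) ha, ?_, hF⟩
  have hmd : (m : ℝ) / d < 1 / 2 := by
    rw [div_lt_iff₀ (by exact_mod_cast (by omega : 0 < d))]
    have h2m : (2 * m : ℝ) < d := by exact_mod_cast hm2
    linarith
  calc 1 / 2 < 1 - (m : ℝ) / d := by linarith
    _ = _ := by rw [hF]
    _ ≤ QF (fun i => proj (a i)) PB := le_QF (isDensity_proj (by simp [hb]))

end
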